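/- arXiv:1708.00673 — 3 statements merged into one kernel-verified Lean document; each statement's English description precedes it below -/
import Mathlib

section
/- Let h_n^{(1)} be the spherical Hankel function of the first kind of order n and z_n^{(1)}(t) = h_n^{(1)}(t) + t (h_n^{(1)})'(t). Then for every n ∈ N and t > 0, |z_n^{(1)}(t)/h_n^{(1)}(t)| ≥ n(n+1)/(2t² + n + 1). -/
/-!
For `t > 0` write `h_n(t) = (-i)^(n+1) e^(it) t⁻¹ B_n(i u)` with `u = 1/(2t)` and the rescaled
Bessel polynomial `B_n(x) = Σ_m (n+m)!/(m!(n-m)!) x^m`. The three-term recurrence of `B_n` gives,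
by induction, `B_n(x) B_n(-x) = Σ_p (-1)^p A_{n,p} x^(2p)` with `A_{n,p} ≥ 0`, hence
`|h_n(t)|² = 4u² Σ_p A_{n,p} u^(2p)`. Since `Re(z_n conj h_n) = |h_n|² + (t/2) (|h_n|²)'`, this
gives `Re(z_n conj h_n) = -4u² Σ_p p A_{n,p} u^(2p)`, so
`|z_n/h_n| ≥ Σ_p p A_{n,p} u^(2p) / Σ_p A_{n,p} u^(2p)`. The ratio
`(p+1) A_{n,p+1} = 2(2p+1)(n+p+1)(n-p) A_{n,p}` compares the two sums coefficientwise with the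
claimed bound.
-/

open Real Finset

/-- The spherical Hankel function of the first kind of order `n`, given for `t > 0`
by the closed-form finite sum
`h_n^{(1)}(t) = (-i)^{n+1} (e^{it}/t) Σ_{m=0}^n (i^m/(m! (2t)^m)) (n+m)!/(n−m)!`. -/
noncomputable def sphericalHankel (n : ℕ) (t : ℝ) : ℂ :=
  (-Complex.I) ^ (n + 1) * Complex.exp (Complex.I * t) / t *
    ∑ m ∈ Finset.range (n + 1),
      Complex.I ^ m / ((m.factorial : ℂ) * (2 * (t : ℂ)) ^ m) *
        (((n + m).factorial : ℂ) / ((n - m).factorial : ℂ))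

/-- `z_n^{(1)}(t) = h_n^{(1)}(t) + t (h_n^{(1)})'(t)`. -/
noncomputable def zfun (n : ℕ) (t : ℝ) : ℂ :=
  sphericalHankel n t + t * deriv (sphericalHankel n) t

open scoped Nat ComplexConjugate
open Complex (I)

noncomputable def besselCoeff (n m : ℕ) : ℝ :=
  if m ≤ n then (n + m)! / (m ! * (n - m)!) else 0

lemma besselCoeff_of_le {n m : ℕ} (h : m ≤ n) :
    besselCoeff n m = (n + m)! / (m ! * (n - m)!) :=
  if_pos h

lemma besselCoeff_of_lt {n m : ℕ} (h : n < m) : besselCoeff n m = 0 :=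
  if_neg h.not_ge

lemma besselCoeff_zero_right (n : ℕ) : besselCoeff n 0 = 1 := by
  simp [besselCoeff, Nat.factorial_ne_zero]

lemma besselCoeff_nonneg (n m : ℕ) : 0 ≤ besselCoeff n m := by
  unfold besselCoeff; split_ifs <;> positivity

lemma besselCoeff_succ_right (n m : ℕ) :
    (m + 1 : ℝ) * besselCoeff n (m + 1) = (n + m + 1) * (n - m) * besselCoeff n m := by
  rcases lt_trichotomy m n with h | rfl | h
  · obtain ⟨k, rfl⟩ := Nat.exists_eq_add_of_lt h
    rw [besselCoeff_of_le h, besselCoeff_of_le h.le, show m + k + 1 - (m + 1) = k by omega,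
      show m + k + 1 - m = k + 1 by omega, show m + k + 1 + (m + 1) = m + k + 1 + m + 1 by omega]
    push_cast [Nat.factorial_succ]
    field_simp
    ring
  · rw [besselCoeff_of_lt m.lt_succ_self]; ring
  · rw [besselCoeff_of_lt h, besselCoeff_of_lt (by omega)]; ring

lemma besselCoeff_succ_left (n m : ℕ) :
    (n + 1 - m : ℝ) * besselCoeff (n + 1) m = (n + m + 1) * besselCoeff n m := by
  rcases le_or_gt m n with h | h
  · obtain ⟨k, rfl⟩ := Nat.exists_eq_add_of_le h
    rw [besselCoeff_of_le h, besselCoeff_of_le (by omega), show m + k + 1 - m = k + 1 by omega,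
      show m + k - m = k by omega, show m + k + 1 + m = m + k + m + 1 by omega]
    push_cast [Nat.factorial_succ]
    field_simp
    ring
  · rw [besselCoeff_of_lt h]
    rcases Nat.lt_or_ge (n + 1) m with h' | h'
    · rw [besselCoeff_of_lt h']; ring
    · rw [show m = n + 1 by omega]; push_cast; ring

lemma besselCoeff_rec (n m : ℕ) :
    besselCoeff (n + 2) (m + 1)
      = 2 * (2 * n + 3) * besselCoeff (n + 1) m + besselCoeff n (m + 1) := by
  rcases Nat.lt_or_ge (n + 1) m with h | h
  · rw [besselCoeff_of_lt (by omega), besselCoeff_of_lt h, besselCoeff_of_lt (by omega)]; ring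
  rcases h.lt_or_eq with h | rfl
  · -- Clearing `(m + 1) * (n + 1 - m)`, the first-order steps make every term a multiple of
    -- `besselCoeff (n + 1) m`; on the diagonal that factor vanishes, so we go through
    -- `besselCoeff (n + 2) (n + 1)` instead.
    have e1 := besselCoeff_succ_left (n + 1) (m + 1)
    have e2 := besselCoeff_succ_right (n + 1) m
    have e3 := besselCoeff_succ_left n m
    have e4 := besselCoeff_succ_right n m
    push_cast at e1 e2
    have hm : (m + 1 : ℝ) * (n + 1 - m) ≠ 0 := by
      have : (m : ℝ) < n + 1 := by exact_mod_cast h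
      apply mul_ne_zero <;> linarith
    apply mul_left_cancel₀ hm
    linear_combination (m + 1 : ℝ) * e1 + (n + m + 3 : ℝ) * e2 - (n + 1 - m : ℝ) * e4
      + (n - m : ℝ) * (n + 1 - m) * e3
  · have e5 := besselCoeff_succ_right (n + 2) (n + 1)
    have e6 := besselCoeff_succ_left (n + 1) (n + 1)
    push_cast at e5 e6
    rw [besselCoeff_of_lt (by omega : n < n + 1 + 1)]
    apply mul_left_cancel₀ (by positivity : (n + 2 : ℝ) ≠ 0)
    linear_combination e5 + (2 * n + 4 : ℝ) * e6

noncomputable def besselSqCoeff (n p : ℕ) : ℝ :=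
  (2 * p)! / p ! * besselCoeff n p

lemma besselSqCoeff_zero_right (n : ℕ) : besselSqCoeff n 0 = 1 := by
  simp [besselSqCoeff, besselCoeff_zero_right]

lemma besselSqCoeff_of_lt {n p : ℕ} (h : n < p) : besselSqCoeff n p = 0 := by
  rw [besselSqCoeff, besselCoeff_of_lt h, mul_zero]

lemma besselSqCoeff_nonneg (n p : ℕ) : 0 ≤ besselSqCoeff n p :=
  mul_nonneg (by positivity) (besselCoeff_nonneg n p)

lemma factorial_two_mul_succ_div_factorial_succ (p : ℕ) :
    ((2 * (p + 1))! / (p + 1)! : ℝ) = 2 * (2 * p + 1) * ((2 * p)! / p !) := by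
  rw [show 2 * (p + 1) = 2 * p + 1 + 1 by ring]
  push_cast [Nat.factorial_succ]
  field_simp
  ring

lemma besselSqCoeff_succ_right (n p : ℕ) :
    (p + 1 : ℝ) * besselSqCoeff n (p + 1)
      = 2 * (2 * p + 1) * (n + p + 1) * (n - p) * besselSqCoeff n p := by
  rw [besselSqCoeff, besselSqCoeff, factorial_two_mul_succ_div_factorial_succ]
  linear_combination 2 * (2 * p + 1) * ((2 * p)! / p ! : ℝ) * besselCoeff_succ_right n p

lemma besselSqCoeff_succ_left (n p : ℕ) :
    (n + 1 - p : ℝ) * besselSqCoeff (n + 1) p = (n + p + 1) * besselSqCoeff n p := by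
  rw [besselSqCoeff, besselSqCoeff]
  linear_combination ((2 * p)! / p ! : ℝ) * besselCoeff_succ_left n p

lemma besselSqCoeff_rec (n p : ℕ) :
    besselSqCoeff (n + 2) (p + 1) = 4 * (2 * n + 3) ^ 2 * besselSqCoeff (n + 1) p
      - 8 * (2 * n + 3) * (n + p + 1) * besselSqCoeff n p + besselSqCoeff n (p + 1) := by
  simp only [besselSqCoeff, factorial_two_mul_succ_div_factorial_succ]
  linear_combination 2 * (2 * p + 1) * ((2 * p)! / p ! : ℝ) * besselCoeff_rec n p
    - 8 * (2 * n + 3) * ((2 * p)! / p ! : ℝ) * besselCoeff_succ_left n p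

lemma sum_range_eq_sum_range_of_eq_zero {M : Type*} [AddCommMonoid M] {f : ℕ → M} {n N : ℕ}
    (h : n + 1 ≤ N) (hf : ∀ m, n < m → f m = 0) :
    ∑ m ∈ range N, f m = ∑ m ∈ range (n + 1), f m := by
  refine (sum_subset (range_subset_range.mpr h) fun m _ hm => hf m ?_).symm
  simpa using hm

noncomputable def besselPoly (n : ℕ) (x : ℂ) : ℂ :=
  ∑ m ∈ range (n + 1), (besselCoeff n m : ℂ) * x ^ m

noncomputable def besselPolyProd (n : ℕ) (x : ℂ) : ℂ :=
  ∑ p ∈ range (n + 1), (-1) ^ p * (besselSqCoeff n p : ℂ) * x ^ (2 * p)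

noncomputable def besselPolyCross (n : ℕ) (x : ℂ) : ℂ :=
  ∑ p ∈ range (n + 1), (-1) ^ p * (4 * (n + p + 1) * besselSqCoeff n p : ℂ) * x ^ (2 * p + 1)

lemma besselPoly_rec (n : ℕ) (x : ℂ) :
    besselPoly (n + 2) x = 2 * (2 * n + 3) * x * besselPoly (n + 1) x + besselPoly n x := by
  have hn : besselPoly n x = ∑ m ∈ range (n + 3), (besselCoeff n m : ℂ) * x ^ m :=
    (sum_range_eq_sum_range_of_eq_zero (by omega) fun m hm => by
      rw [besselCoeff_of_lt hm, Complex.ofReal_zero, zero_mul]).symm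
  rw [besselPoly, hn, besselPoly, sum_range_succ' _ (n + 2), sum_range_succ' _ (n + 2), mul_sum,
    ← add_assoc, ← sum_add_distrib, besselCoeff_zero_right, besselCoeff_zero_right]
  congr 1
  refine sum_congr rfl fun m _ => ?_
  rw [besselCoeff_rec]
  push_cast
  ring

lemma besselPolyCross_succ (n : ℕ) (x : ℂ) :
    besselPolyCross (n + 1) x
      = 4 * (2 * n + 3) * x * besselPolyProd (n + 1) x - besselPolyCross n x := by
  have hn : besselPolyCross n x = ∑ p ∈ range (n + 2),
      (-1) ^ p * (4 * (n + p + 1) * besselSqCoeff n p : ℂ) * x ^ (2 * p + 1) :=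
    (sum_range_eq_sum_range_of_eq_zero (by omega) fun p hp => by
      rw [besselSqCoeff_of_lt hp]; simp).symm
  rw [hn, besselPolyCross, besselPolyProd, mul_sum, ← sum_sub_distrib]
  refine sum_congr rfl fun p _ => ?_
  have h := congrArg Complex.ofReal (besselSqCoeff_succ_left n p)
  push_cast at h ⊢
  linear_combination -4 * (-1) ^ p * x ^ (2 * p + 1) * h

lemma besselPolyProd_rec (n : ℕ) (x : ℂ) :
    besselPolyProd (n + 2) x = -4 * (2 * n + 3) ^ 2 * x ^ 2 * besselPolyProd (n + 1) x
      + 2 * (2 * n + 3) * x * besselPolyCross n x + besselPolyProd n x := by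
  have hn : besselPolyProd n x
      = ∑ p ∈ range (n + 3), (-1) ^ p * (besselSqCoeff n p : ℂ) * x ^ (2 * p) :=
    (sum_range_eq_sum_range_of_eq_zero (by omega) fun p hp => by
      rw [besselSqCoeff_of_lt hp]; simp).symm
  have hc : besselPolyCross n x = ∑ p ∈ range (n + 2),
      (-1) ^ p * (4 * (n + p + 1) * besselSqCoeff n p : ℂ) * x ^ (2 * p + 1) :=
    (sum_range_eq_sum_range_of_eq_zero (by omega) fun p hp => by
      rw [besselSqCoeff_of_lt hp]; simp).symm
  rw [hn, hc, besselPolyProd, besselPolyProd, sum_range_succ' _ (n + 2), sum_range_succ' _ (n + 2),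
    mul_sum, mul_sum, ← sum_add_distrib, ← add_assoc, ← sum_add_distrib,
    besselSqCoeff_zero_right, besselSqCoeff_zero_right]
  congr 1
  refine sum_congr rfl fun p _ => ?_
  rw [besselSqCoeff_rec]
  push_cast
  ring

lemma besselPoly_mul_neg_and_cross (n : ℕ) :
    (∀ x, besselPoly n x * besselPoly n (-x) = besselPolyProd n x) ∧
    (∀ x, besselPoly (n + 1) x * besselPoly (n + 1) (-x) = besselPolyProd (n + 1) x) ∧
    (∀ x, besselPoly (n + 1) x * besselPoly n (-x) - besselPoly (n + 1) (-x) * besselPoly n x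
      = besselPolyCross n x) := by
  induction n with
  | zero =>
    have h0 : ∀ x, besselPoly 0 x = 1 := fun x => by simp [besselPoly, besselCoeff_zero_right]
    have h1 : ∀ x, besselPoly 1 x = 1 + 2 * x := fun x => by
      norm_num [besselPoly, sum_range_succ, besselCoeff_of_le, besselCoeff_zero_right]
    refine ⟨fun x => ?_, fun x => ?_, fun x => ?_⟩
    · simp [h0, besselPolyProd, besselSqCoeff_zero_right]
    · norm_num [h1, besselPolyProd, sum_range_succ, besselSqCoeff, besselCoeff_of_le]
      ring
    · norm_num [h0, h1, besselPolyCross, besselSqCoeff_zero_right]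
      ring
  | succ n ih =>
    obtain ⟨h0, h1, hc⟩ := ih
    refine ⟨h1, fun x => ?_, fun x => ?_⟩
    · rw [besselPoly_rec, besselPoly_rec, besselPolyProd_rec]
      linear_combination (-4 * (2 * n + 3) ^ 2 * x ^ 2) * h1 x + 2 * (2 * n + 3) * x * hc x + h0 x
    · rw [besselPoly_rec, besselPoly_rec, besselPolyCross_succ]
      linear_combination 4 * (2 * n + 3) * x * h1 x - hc x

lemma conj_besselPoly (n : ℕ) (x : ℂ) : conj (besselPoly n x) = besselPoly n (conj x) := by
  simp [besselPoly, map_sum]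

noncomputable def besselNormSq (n : ℕ) (u : ℝ) : ℝ :=
  ∑ p ∈ range (n + 1), besselSqCoeff n p * u ^ (2 * p)

noncomputable def besselNormSqWeighted (n : ℕ) (u : ℝ) : ℝ :=
  ∑ p ∈ range (n + 1), p * besselSqCoeff n p * u ^ (2 * p)

lemma norm_besselPoly_I_mul_sq (n : ℕ) (u : ℝ) :
    ‖besselPoly n (I * u)‖ ^ 2 = besselNormSq n u := by
  have h : (‖besselPoly n (I * u)‖ ^ 2 : ℂ) = besselPolyProd n (I * u) := by
    rw [← (besselPoly_mul_neg_and_cross n).1, ← Complex.mul_conj', conj_besselPoly]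
    simp
  rw [← Complex.ofReal_inj, Complex.ofReal_pow, h, besselPolyProd, besselNormSq]
  push_cast
  refine sum_congr rfl fun p _ => ?_
  rw [mul_pow, pow_mul, Complex.I_sq, mul_mul_mul_comm, ← mul_pow]
  norm_num

lemma differentiableAt_sphericalHankel (n : ℕ) {t : ℝ} (ht : t ≠ 0) :
    DifferentiableAt ℝ (sphericalHankel n) t := by
  have := Complex.differentiable_ofReal
  unfold sphericalHankel
  fun_prop (disch := simp [ht, Nat.factorial_ne_zero])

lemma sphericalHankel_eq (n : ℕ) (t : ℝ) :
    sphericalHankel n t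
      = (-I) ^ (n + 1) * Complex.exp (I * t) / t * besselPoly n (I * ↑(2 * t)⁻¹) := by
  rw [sphericalHankel, besselPoly]
  congr 1
  refine sum_congr rfl fun m hm => ?_
  rw [besselCoeff_of_le (Nat.lt_succ_iff.mp (mem_range.mp hm))]
  push_cast
  simp only [mul_pow, inv_pow, div_eq_mul_inv, mul_inv]
  ring

lemma norm_sphericalHankel_sq (n : ℕ) {t : ℝ} (ht : t ≠ 0) :
    ‖sphericalHankel n t‖ ^ 2 = 4 * ((2 * t)⁻¹) ^ 2 * besselNormSq n (2 * t)⁻¹ := by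
  rw [sphericalHankel_eq n t, norm_mul, mul_pow, norm_besselPoly_I_mul_sq, norm_div, norm_mul,
    norm_pow, norm_neg, Complex.norm_I, one_pow, one_mul, Complex.norm_exp_I_mul_ofReal,
    Complex.norm_real, Real.norm_eq_abs, div_pow, sq_abs]
  field_simp
  ring

lemma hasDerivAt_inv_const_mul_pow (k : ℕ) {c t : ℝ} (hc : c ≠ 0) (ht : t ≠ 0) :
    HasDerivAt (fun s : ℝ => ((c * s)⁻¹) ^ k) (-k * ((c * t)⁻¹) ^ k / t) t := by
  have h := (((hasDerivAt_id' t).const_mul c).fun_inv (mul_ne_zero hc ht)).fun_pow k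
  refine h.congr_deriv ?_
  rcases k with _ | k
  · simp
  · have hu : c / (c * t) ^ 2 = (c * t)⁻¹ / t := by field_simp
    rw [Nat.add_sub_cancel, mul_one, neg_div, hu]
    push_cast
    ring

lemma re_zfun_mul_conj (n : ℕ) {t : ℝ} (ht : t ≠ 0) :
    (zfun n t * conj (sphericalHankel n t)).re
      = -(4 * ((2 * t)⁻¹) ^ 2 * besselNormSqWeighted n (2 * t)⁻¹) := by
  set u := (2 * t)⁻¹
  have hnorm : ∀ s ≠ 0, ‖sphericalHankel n s‖ ^ 2
      = ∑ p ∈ range (n + 1), 4 * besselSqCoeff n p * ((2 * s)⁻¹) ^ (2 * p + 2) := by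
    intro s hs
    rw [norm_sphericalHankel_sq n hs, besselNormSq, mul_sum]
    exact sum_congr rfl fun p _ => by ring
  have hderiv : HasDerivAt (fun s => ‖sphericalHankel n s‖ ^ 2)
      (∑ p ∈ range (n + 1), 4 * besselSqCoeff n p * (-(2 * p + 2 : ℕ) * u ^ (2 * p + 2) / t))
      t := by
    refine (HasDerivAt.fun_sum fun p _ =>
      (hasDerivAt_inv_const_mul_pow (2 * p + 2) two_ne_zero ht).const_mul _).congr_of_eventuallyEq ?_
    filter_upwards [eventually_ne_nhds ht] with s hs using hnorm s hs
  have hinner := ((differentiableAt_sphericalHankel n ht).hasDerivAt.norm_sq).unique hderiv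
  rw [Complex.inner] at hinner
  have hsum : ∑ p ∈ range (n + 1), 4 * besselSqCoeff n p * u ^ (2 * p + 2)
      + t / 2 * ∑ p ∈ range (n + 1),
          4 * besselSqCoeff n p * (-(2 * p + 2 : ℕ) * u ^ (2 * p + 2) / t)
      = -(4 * u ^ 2 * besselNormSqWeighted n u) := by
    rw [besselNormSqWeighted, mul_sum, mul_sum, ← sum_add_distrib, ← sum_neg_distrib]
    refine sum_congr rfl fun p _ => ?_
    push_cast
    field_simp
    ring
  rw [zfun, add_mul, Complex.add_re, Complex.mul_conj', mul_assoc, Complex.re_ofReal_mul]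
  norm_cast
  linear_combination hnorm t ht + t / 2 * hinner + hsum

lemma besselNormSq_pos (n : ℕ) (u : ℝ) : 0 < besselNormSq n u := by
  have h := single_le_sum (f := fun p => besselSqCoeff n p * u ^ (2 * p))
    (fun p _ => mul_nonneg (besselSqCoeff_nonneg n p) ((even_two_mul p).pow_nonneg u))
    (mem_range.mpr n.succ_pos)
  simp only [besselSqCoeff_zero_right, mul_zero, pow_zero, mul_one] at h
  rw [besselNormSq]
  linarith

lemma besselNormSqWeighted_nonneg (n : ℕ) (u : ℝ) : 0 ≤ besselNormSqWeighted n u :=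
  sum_nonneg fun p _ => mul_nonneg (mul_nonneg p.cast_nonneg (besselSqCoeff_nonneg n p))
    ((even_two_mul p).pow_nonneg u)

lemma besselNormSqWeighted_eq_sum_succ (n : ℕ) (u : ℝ) :
    besselNormSqWeighted n u
      = ∑ p ∈ range (n + 1), (p + 1) * besselSqCoeff n (p + 1) * u ^ (2 * p + 2) := by
  rw [besselNormSqWeighted, sum_range_succ', sum_range_succ _ n,
    besselSqCoeff_of_lt n.lt_succ_self]
  simp only [CharP.cast_eq_zero, zero_mul, add_zero, mul_zero, Nat.cast_add, Nat.cast_one]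
  exact sum_congr rfl fun p _ => by ring

lemma two_mul_besselNormSq_le (n : ℕ) (u : ℝ) :
    2 * n * (n + 1) * u ^ 2 * besselNormSq n u
      ≤ (1 + 2 * (n + 1) * u ^ 2) * besselNormSqWeighted n u := by
  have hcoeff : ∀ p ∈ range (n + 1), 2 * n * (n + 1) * besselSqCoeff n p
      ≤ (p + 1) * besselSqCoeff n (p + 1) + 2 * (n + 1) * p * besselSqCoeff n p := by
    intro p hp
    have hpn : (p : ℝ) ≤ n := by exact_mod_cast Nat.lt_succ_iff.mp (mem_range.mp hp)
    have hA := besselSqCoeff_nonneg n p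
    rw [besselSqCoeff_succ_right]
    nlinarith [mul_nonneg (mul_nonneg hA (sub_nonneg.mpr hpn))
      (by positivity : (0 : ℝ) ≤ 2 * p * (n + p + 1) + p)]
  calc 2 * n * (n + 1) * u ^ 2 * besselNormSq n u
      = ∑ p ∈ range (n + 1), 2 * n * (n + 1) * besselSqCoeff n p * u ^ (2 * p + 2) := by
        rw [besselNormSq, mul_sum]
        exact sum_congr rfl fun p _ => by ring
    _ ≤ ∑ p ∈ range (n + 1),
          ((p + 1) * besselSqCoeff n (p + 1) + 2 * (n + 1) * p * besselSqCoeff n p)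
            * u ^ (2 * p + 2) :=
        sum_le_sum fun p hp => mul_le_mul_of_nonneg_right (hcoeff p hp)
          ((even_two_mul (p + 1)).pow_nonneg u)
    _ = (1 + 2 * (n + 1) * u ^ 2) * besselNormSqWeighted n u := by
        rw [add_mul, one_mul]
        nth_rw 1 [besselNormSqWeighted_eq_sum_succ]
        rw [besselNormSqWeighted, mul_sum, ← sum_add_distrib]
        exact sum_congr rfl fun p _ => by ring

lemma div_le_besselNormSqWeighted_div (n : ℕ) {t : ℝ} (ht : 0 < t) :
    n * (n + 1) / (2 * t ^ 2 + n + 1)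
      ≤ besselNormSqWeighted n (2 * t)⁻¹ / besselNormSq n (2 * t)⁻¹ := by
  rw [div_le_div_iff₀ (by positivity) (besselNormSq_pos n _)]
  have h := two_mul_besselNormSq_le n (2 * t)⁻¹
  have hu : 1 + 2 * (n + 1) * ((2 * t)⁻¹) ^ 2
      = (2 * t ^ 2 + n + 1) * (2 * ((2 * t)⁻¹) ^ 2) := by
    field_simp
    ring
  rw [hu] at h
  exact le_of_mul_le_mul_right (by linear_combination h)
    (by positivity : 0 < 2 * ((2 * t)⁻¹) ^ 2)

lemma abs_re_mul_conj_div_le_norm_div (z w : ℂ) : |(z * conj w).re| / ‖w‖ ^ 2 ≤ ‖z / w‖ := by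
  rcases eq_or_ne w 0 with rfl | hw
  · simp
  calc |(z * conj w).re| / ‖w‖ ^ 2 ≤ ‖z * conj w‖ / ‖w‖ ^ 2 := by
        gcongr
        exact Complex.abs_re_le_norm _
    _ = ‖z / w‖ := by
        rw [norm_mul, Complex.norm_conj, norm_div]
        field_simp

/-- For every `n ∈ ℕ` and `t > 0`,
`|z_n^{(1)}(t)/h_n^{(1)}(t)| ≥ n(n+1)/(2t² + n + 1)`. -/
theorem stmt8 (n : ℕ) (t : ℝ) (ht : 0 < t) :
    (n : ℝ) * (n + 1) / (2 * t ^ 2 + n + 1) ≤ ‖zfun n t / sphericalHankel n t‖ := by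
  have hu : (0 : ℝ) < 4 * ((2 * t)⁻¹) ^ 2 := by positivity
  calc (n : ℝ) * (n + 1) / (2 * t ^ 2 + n + 1)
      ≤ besselNormSqWeighted n (2 * t)⁻¹ / besselNormSq n (2 * t)⁻¹ :=
        div_le_besselNormSqWeighted_div n ht
    _ = |(zfun n t * conj (sphericalHankel n t)).re| / ‖sphericalHankel n t‖ ^ 2 := by
        rw [re_zfun_mul_conj n ht.ne', norm_sphericalHankel_sq n ht.ne', abs_neg,
          abs_of_nonneg (mul_nonneg hu.le (besselNormSqWeighted_nonneg n _)),
          mul_div_mul_left _ _ hu.ne']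
    _ ≤ ‖zfun n t / sphericalHankel n t‖ := abs_re_mul_conj_div_le_norm_div _ _
end

section
/- Let n ≥ 1, k > 0, R > 0. If kR ≥ (5/4)n + 1, then |γ_n(kR)| ≥ n/4, where γ_n(t) = n + 1 − t h_{n+1}^{(1)}(t)/h_n^{(1)}(t)} and |t h_{n+1}^{(1)}(t)/h_n^{(1)}(t)| ≥ t for the spherical Hankel functions. Consequently (n + kR)/|γ_n(kR)| ≤ 4(1 + kR/n). -/
/-! The ratio bound `‖h_n(t)‖ ≤ ‖h_{n+1}(t)‖` makes `‖t h_{n+1}(t)/h_n(t)‖ ≥ t`, so by the reverse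
triangle inequality `‖γ_n(t)‖ ≥ t - (n + 1)`, which is at least `n/4` once `t ≥ (5/4)n + 1`.
The second estimate is then arithmetic. -/

lemma le_norm_ofReal_mul_div {𝕜 : Type*} [RCLike 𝕜] {t : ℝ} {a b : 𝕜} (ht : 0 ≤ t)
    (hb : 0 < ‖b‖) (hab : ‖b‖ ≤ ‖a‖) : t ≤ ‖(t : 𝕜) * a / b‖ := by
  rw [norm_div, norm_mul, RCLike.norm_ofReal, abs_of_nonneg ht, le_div_iff₀ hb]
  exact mul_le_mul_of_nonneg_left hab ht

lemma sub_norm_le_norm_sub_of_le_norm {E : Type*} [SeminormedAddCommGroup E] {t : ℝ} {z : E}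
    (w : E) (hz : t ≤ ‖z‖) : t - ‖w‖ ≤ ‖w - z‖ := by
  have := norm_sub_norm_le z w
  rw [norm_sub_rev] at this
  linarith

lemma add_div_le_four_mul_one_add_div {n t g : ℝ} (hn : 0 < n) (ht : 0 ≤ t) (hg : n / 4 ≤ g) :
    (n + t) / g ≤ 4 * (1 + t / n) := by
  have hgpos : 0 < g := lt_of_lt_of_le (by positivity) hg
  rw [div_le_iff₀ hgpos, one_add_div hn.ne']
  calc n + t = 4 * ((n + t) / n) * (n / 4) := by field_simp
    _ ≤ 4 * ((n + t) / n) * g := by gcongr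

theorem stmt10_general (h : ℕ → ℝ → ℂ)
    (hpos : ∀ m : ℕ, ∀ t : ℝ, 0 < t → 0 < ‖h m t‖)
    (hmono : ∀ m : ℕ, ∀ t : ℝ, 0 < t → ‖h m t‖ ≤ ‖h (m + 1) t‖)
    (γ : ℕ → ℝ → ℂ)
    (hγ : γ = fun (m : ℕ) (t : ℝ) => (m : ℂ) + 1 - (t : ℂ) * h (m + 1) t / h m t)
    (n : ℕ) (hn : 1 ≤ n) (k R : ℝ)
    (hkR : (5 / 4 : ℝ) * n + 1 ≤ k * R) :
    (n : ℝ) / 4 ≤ ‖γ n (k * R)‖ ∧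
    ((n : ℝ) + k * R) / ‖γ n (k * R)‖ ≤ 4 * (1 + k * R / n) := by
  set t := k * R
  have ht : 0 < t := by linarith [(n.cast_nonneg : (0 : ℝ) ≤ n)]
  have hratio : t ≤ ‖(t : ℂ) * h (n + 1) t / h n t‖ :=
    le_norm_ofReal_mul_div ht.le (hpos n t ht) (hmono n t ht)
  have hnorm_succ : ‖(n : ℂ) + 1‖ = n + 1 := by
    exact_mod_cast Complex.norm_natCast (n + 1)
  have hγ_lower : (n : ℝ) / 4 ≤ ‖γ n t‖ := by
    have := sub_norm_le_norm_sub_of_le_norm ((n : ℂ) + 1) hratio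
    rw [hnorm_succ] at this
    rw [hγ]
    linarith
  exact ⟨hγ_lower, add_div_le_four_mul_one_add_div (by exact_mod_cast hn) ht.le hγ_lower⟩

/-- Let `n ≥ 1`, `k > 0`, `R > 0` with `kR ≥ (5/4)n + 1`. With
`γ_n(t) = n + 1 − t h_{n+1}(t)/h_n(t)` and the spherical Hankel bounds
`0 < |h_n(t)| ≤ |h_{n+1}(t)|` for `t > 0`, one has `|γ_n(kR)| ≥ n/4` and consequently
`(n + kR)/|γ_n(kR)| ≤ 4(1 + kR/n)`. -/
theorem stmt10 (h : ℕ → ℝ → ℂ)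
    (hpos : ∀ m : ℕ, ∀ t : ℝ, 0 < t → 0 < ‖h m t‖)
    (hmono : ∀ m : ℕ, ∀ t : ℝ, 0 < t → ‖h m t‖ ≤ ‖h (m + 1) t‖)
    (γ : ℕ → ℝ → ℂ)
    (hγ : γ = fun (m : ℕ) (t : ℝ) => (m : ℂ) + 1 - (t : ℂ) * h (m + 1) t / h m t)
    (n : ℕ) (hn : 1 ≤ n) (k R : ℝ) (hk : 0 < k) (hR : 0 < R)
    (hkR : (5 / 4 : ℝ) * n + 1 ≤ k * R) :
    (n : ℝ) / 4 ≤ ‖γ n (k * R)‖ ∧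
    ((n : ℝ) + k * R) / ‖γ n (k * R)‖ ≤ 4 * (1 + k * R / n) :=
  stmt10_general h hpos hmono γ hγ n hn k R hkR
end

section
/- Combining the two regimes kR ≥ (5/4)n + 1 and kR ≤ (5/4)n + 1, one obtains (n + kR)/|γ_n(kR)| ≤ 4(1 + (5/2)kR) for all n ≥ 1, k > 0, R > 0, hence |(R/ρ) z_n^{(1)}(kρ)/z_n^{(1)}(kR)| ≤ 4 + 10kR whenever additionally |h_n^{(1)}(kρ)/h_n^{(1)}(kR)| ≤ 1 and |h_{n-1}^{(1)}(t)| ≤ |h_n^{(1)}(t)| for t > 0. -/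
/-!
The recurrence for `(h_n)'` turns `z_n(t) = h_n(t) + t h_n'(t)` into `-n h_n(t) + t h_{n-1}(t)`,
so monotonicity in the order gives `|z_n(t)| ≤ (n + t)|h_n(t)|`. At `t = kρ` the prefactor `R/ρ`
brings `n + kρ` down to at most `n + kR`, the ratio bound replaces `h_n(kρ)` by `h_n(kR)`, and
`(n + kR)|h_n(kR)| = ((n + kR)/|γ_n(kR)|) |z_n(kR)|`, which the combined regime bound controls.
-/

theorem regime_bound_combine {ν t g : ℝ} (hν : 1 ≤ ν) (ht : 0 ≤ t)
    (hlarge : 5 / 4 * ν + 1 ≤ t → (ν + t) / g ≤ 4 * (1 + t / ν))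
    (hsmall : t ≤ 5 / 4 * ν + 1 → 1 / g ≤ 1 / ν * (1 + 5 / 2 * t)) :
    (ν + t) / g ≤ 4 * (1 + 5 / 2 * t) := by
  have hν0 : 0 < ν := by linarith
  rcases le_total (5 / 4 * ν + 1) t with hcase | hcase
  · have ht_div : t / ν ≤ 5 / 2 * t := by
      rw [div_le_iff₀ hν0]
      nlinarith
    linarith [hlarge hcase]
  · have hsum : (ν + t) / ν ≤ 4 := by
      rw [div_le_iff₀ hν0]
      linarith
    calc (ν + t) / g = (ν + t) * (1 / g) := by ring
      _ ≤ (ν + t) * (1 / ν * (1 + 5 / 2 * t)) := by gcongr; exact hsmall hcase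
      _ = (ν + t) / ν * (1 + 5 / 2 * t) := by ring
      _ ≤ 4 * (1 + 5 / 2 * t) := by gcongr

theorem norm_add_mul_le_of_recurrence {ν t : ℝ} {a b d : ℂ} (hν : 0 ≤ ν) (ht : 0 < t)
    (hd : d = -(((ν : ℂ) + 1) / (t : ℂ)) * a + b) (hba : ‖b‖ ≤ ‖a‖) :
    ‖a + (t : ℂ) * d‖ ≤ (ν + t) * ‖a‖ := by
  have hform : a + (t : ℂ) * d = -(ν : ℂ) * a + (t : ℂ) * b := by
    have htc : (t : ℂ) ≠ 0 := by exact_mod_cast ht.ne'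
    rw [hd]
    field_simp
    ring
  calc ‖a + (t : ℂ) * d‖ ≤ ‖-(ν : ℂ) * a‖ + ‖(t : ℂ) * b‖ := hform ▸ norm_add_le _ _
    _ = ν * ‖a‖ + t * ‖b‖ := by
      simp only [norm_mul, norm_neg, Complex.norm_real, Real.norm_eq_abs, abs_of_nonneg hν,
        abs_of_pos ht]
    _ ≤ (ν + t) * ‖a‖ := by nlinarith

theorem div_mul_add_le {ν k R ρ : ℝ} (hν : 0 ≤ ν) (hRρ : R ≤ ρ) (hρ : 0 < ρ) :
    R / ρ * (ν + k * ρ) ≤ ν + k * R := by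
  have hcancel : R / ρ * (k * ρ) = k * R := by field_simp
  have hscale : R / ρ * ν ≤ ν := mul_le_of_le_one_left hν ((div_le_one hρ).2 hRρ)
  linarith [mul_add (R / ρ) ν (k * ρ)]

theorem norm_div_le_of_norm_le {x c C : ℝ} {z w : ℂ} (hw : w ≠ 0) (hC : 0 ≤ C)
    (hx : x ≤ c * ‖w‖) (hc : c / ‖z / w‖ ≤ C) : x / ‖z‖ ≤ C := by
  rcases eq_or_ne z 0 with rfl | hz
  · simpa using hC
  have hzw : 0 < ‖z / w‖ := norm_pos_iff.2 (div_ne_zero hz hw)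
  rw [div_le_iff₀ hzw] at hc
  rw [div_le_iff₀ (norm_pos_iff.2 hz)]
  calc x ≤ c * ‖w‖ := hx
    _ ≤ C * ‖z / w‖ * ‖w‖ := by gcongr
    _ = C * ‖z‖ := by rw [norm_div, mul_assoc, div_mul_cancel₀ _ (norm_ne_zero_iff.2 hw)]

/-- Combining the two regimes `kR ≥ (5/4)n+1` and `kR ≤ (5/4)n+1` one gets
`(n + kR)/|γ_n(kR)| ≤ 4(1 + (5/2)kR)` for all `n ≥ 1`, `k > 0`, `R > 0`, and hence
`|(R/ρ) z_n(kρ)/z_n(kR)| ≤ 4 + 10kR`, under the stated monotonicity and ratio bounds for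
the spherical Hankel functions. -/
theorem stmt12 (h : ℕ → ℝ → ℂ)
    (hne : ∀ m : ℕ, ∀ t : ℝ, 0 < t → h m t ≠ 0)
    (z : ℕ → ℝ → ℂ)
    (hz : z = fun (m : ℕ) (t : ℝ) => h m t + (t : ℂ) * deriv (h m) t)
    (γ : ℕ → ℝ → ℂ)
    (hγ : γ = fun (m : ℕ) (t : ℝ) => z m t / h m t)
    (hrec : ∀ m : ℕ, 1 ≤ m → ∀ t : ℝ, 0 < t →
      deriv (h m) t = -(((m : ℂ) + 1) / (t : ℂ)) * h m t + h (m - 1) t)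
    (hmono : ∀ m : ℕ, 1 ≤ m → ∀ t : ℝ, 0 < t → ‖h (m - 1) t‖ ≤ ‖h m t‖)
    (n : ℕ) (hn : 1 ≤ n) (k R ρ : ℝ) (hk : 0 < k) (hR : 0 < R) (hρ : R < ρ)
    (hratio : ‖h n (k * ρ) / h n (k * R)‖ ≤ 1)
    (hb1 : (5 / 4 : ℝ) * n + 1 ≤ k * R →
      ((n : ℝ) + k * R) / ‖γ n (k * R)‖ ≤ 4 * (1 + k * R / n))
    (hb2 : k * R ≤ (5 / 4 : ℝ) * n + 1 →
      1 / ‖γ n (k * R)‖ ≤ (1 / n) * (1 + (5 / 2 : ℝ) * (k * R))) :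
    ((n : ℝ) + k * R) / ‖γ n (k * R)‖ ≤ 4 * (1 + (5 / 2 : ℝ) * (k * R)) ∧
    ‖((R : ℂ) / (ρ : ℂ)) * z n (k * ρ) / z n (k * R)‖ ≤ 4 + 10 * (k * R) := by
  have hρ0 : 0 < ρ := hR.trans hρ
  have hkR : 0 < k * R := by positivity
  have hkρ : 0 < k * ρ := by positivity
  have hhR : h n (k * R) ≠ 0 := hne n _ hkR
  have hcombined := regime_bound_combine (by exact_mod_cast hn) hkR.le hb1 hb2
  refine ⟨hcombined, ?_⟩
  have hzρ : ‖z n (k * ρ)‖ ≤ (n + k * ρ) * ‖h n (k * ρ)‖ := by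
    subst hz
    exact norm_add_mul_le_of_recurrence (Nat.cast_nonneg n) hkρ
      (by exact_mod_cast hrec n hn _ hkρ) (hmono n hn _ hkρ)
  have hhρ : ‖h n (k * ρ)‖ ≤ ‖h n (k * R)‖ := by
    rwa [norm_div, div_le_one (norm_pos_iff.2 hhR)] at hratio
  have hnum : ‖((R : ℂ) / (ρ : ℂ)) * z n (k * ρ)‖ ≤ (n + k * R) * ‖h n (k * R)‖ := by
    rw [norm_mul, ← Complex.ofReal_div, Complex.norm_real, Real.norm_of_nonneg (by positivity)]
    calc R / ρ * ‖z n (k * ρ)‖ ≤ R / ρ * ((n + k * ρ) * ‖h n (k * ρ)‖) := by gcongr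
      _ = R / ρ * (n + k * ρ) * ‖h n (k * ρ)‖ := by ring
      _ ≤ (n + k * R) * ‖h n (k * R)‖ := by
        gcongr
        exact div_mul_add_le (Nat.cast_nonneg n) hρ.le hρ0
  rw [norm_div]
  subst hγ
  exact norm_div_le_of_norm_le hhR (by positivity) hnum (by linarith)
end
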